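/- arXiv:1801.08313 — 3 statements merged into one kernel-verified Lean document; each statement's English description precedes it below -/
import Mathlib

section
/- Let k be a field, fix a total order on monomials of k[T_1,…,T_m] refining divisibility (a monomial order), and let P_1,…,P_l be polynomials whose leading monomials lm(P_1),…,lm(P_l) are algebraically independent over k. Then P_1,…,P_l are algebraically independent over k. -/
/-!
For `α : Fin l →₀ ℕ` write `L α = ∑ αᵢ • lmᵢ` (`Finsupp.linearCombination ℕ lm α`), the exponent
of `∏ lmᵢ ^ αᵢ`. Leading terms multiply: the support of `∏ Pᵢ ^ αᵢ` lies below `L α`, with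
coefficient `∏ lc(Pᵢ) ^ αᵢ ≠ 0` there. Independence of the monomials `lmᵢ` makes `L` injective,
so for a relation `Q(P) = 0` exactly one exponent `α₀` of `Q` maximises `L`, and the coefficient
of `L α₀` in `Q(P)` is `Q_{α₀} · ∏ lc(Pᵢ) ^ α₀ᵢ ≠ 0`.
-/

open MvPolynomial

theorem Finset.exists_mem_forall_rel_image {α β : Type*} {r : β → β → Prop} [IsTrans β r]
    [Std.Total r] (f : α → β) {s : Finset α} (hs : s.Nonempty) :
    ∃ a ∈ s, ∀ b ∈ s, r (f b) (f a) := by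
  induction hs using Finset.Nonempty.cons_induction with
  | singleton a => exact ⟨a, mem_singleton_self a, by simp [refl_of r]⟩
  | cons a s ha _ ih =>
    obtain ⟨b, hb, hb_max⟩ := ih
    rcases total_of r (f a) (f b) with hab | hba
    · exact ⟨b, mem_cons_of_mem hb, (forall_mem_cons ha _).2 ⟨hab, hb_max⟩⟩
    · exact ⟨a, mem_cons_self a s,
        (forall_mem_cons ha _).2 ⟨refl_of r _, fun c hc => _root_.trans (hb_max c hc) hba⟩⟩

section AddRel

variable {M : Type*} {le : M → M → Prop}

theorem rel_add_add [AddCommMagma M] [IsTrans M le] (hadd : ∀ a b c, le a b → le (a + c) (b + c))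
    {a b u v : M} (hu : le u a) (hv : le v b) : le (u + v) (a + b) :=
  _root_.trans (hadd _ _ _ hu) (by simpa only [add_comm a] using hadd _ _ a hv)

theorem eq_and_eq_of_add_eq_of_rel [AddCommMonoid M] [IsCancelAdd M] [IsPartialOrder M le]
    (hadd : ∀ a b c, le a b → le (a + c) (b + c)) {a b u v : M} (hu : le u a) (hv : le v b)
    (huv : u + v = a + b) : u = a ∧ v = b := by
  have hav : a + v = a + b :=
    antisymm (by simpa only [add_comm a] using hadd _ _ a hv) (huv ▸ hadd _ _ v hu)
  have hvb : v = b := add_left_cancel hav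
  exact ⟨add_right_cancel (huv.trans (by rw [hvb])), hvb⟩

end AddRel

namespace MvPolynomial

variable {σ R : Type*} [CommSemiring R] {le : (σ →₀ ℕ) → (σ →₀ ℕ) → Prop} [IsPartialOrder _ le]

theorem rel_of_mem_support_mul (hadd : ∀ a b c, le a b → le (a + c) (b + c))
    {f g : MvPolynomial σ R} {a b : σ →₀ ℕ}
    (hf : ∀ d ∈ f.support, le d a) (hg : ∀ d ∈ g.support, le d b) :
    ∀ d ∈ (f * g).support, le d (a + b) := by
  classical
  intro d hd
  obtain ⟨u, hu, v, hv, rfl⟩ := Finset.mem_add.1 (support_mul f g hd)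
  exact rel_add_add hadd (hf u hu) (hg v hv)

theorem coeff_add_mul_of_rel (hadd : ∀ a b c, le a b → le (a + c) (b + c))
    {f g : MvPolynomial σ R} {a b : σ →₀ ℕ}
    (hf : ∀ d ∈ f.support, le d a) (hg : ∀ d ∈ g.support, le d b) :
    coeff (a + b) (f * g) = coeff a f * coeff b g := by
  classical
  rw [coeff_mul,
    Finset.sum_eq_single_of_mem (a, b) (Finset.HasAntidiagonal.mem_antidiagonal.2 rfl)]
  intro x hx hxab
  by_contra hne
  have hu : x.1 ∈ f.support := mem_support_iff.2 (left_ne_zero_of_mul hne)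
  have hv : x.2 ∈ g.support := mem_support_iff.2 (right_ne_zero_of_mul hne)
  obtain ⟨h1, h2⟩ := eq_and_eq_of_add_eq_of_rel hadd (hf _ hu) (hg _ hv)
    (Finset.HasAntidiagonal.mem_antidiagonal.1 hx)
  exact hxab (Prod.ext h1 h2)

theorem rel_of_mem_support_prod (hadd : ∀ a b c, le a b → le (a + c) (b + c))
    {ι : Type*} (s : Finset ι) {f : ι → MvPolynomial σ R} {a : ι → σ →₀ ℕ}
    (hf : ∀ i ∈ s, ∀ d ∈ (f i).support, le d (a i)) :
    ∀ d ∈ (∏ i ∈ s, f i).support, le d (∑ i ∈ s, a i) := by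
  classical
  induction s using Finset.induction_on with
  | empty =>
    intro d hd
    rw [Finset.prod_empty] at hd
    rw [Finset.sum_empty,
      Finset.mem_singleton.1 (support_monomial_subset (s := 0) (a := (1 : R)) hd)]
    exact refl_of le 0
  | insert i s hi ih =>
    rw [Finset.prod_insert hi, Finset.sum_insert hi]
    exact rel_of_mem_support_mul hadd (hf i (s.mem_insert_self i))
      (ih fun j hj => hf j (Finset.mem_insert_of_mem hj))

theorem coeff_sum_prod_of_rel (hadd : ∀ a b c, le a b → le (a + c) (b + c))
    {ι : Type*} (s : Finset ι) {f : ι → MvPolynomial σ R} {a : ι → σ →₀ ℕ}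
    (hf : ∀ i ∈ s, ∀ d ∈ (f i).support, le d (a i)) :
    coeff (∑ i ∈ s, a i) (∏ i ∈ s, f i) = ∏ i ∈ s, coeff (a i) (f i) := by
  classical
  induction s using Finset.induction_on with
  | empty => simp
  | insert i s hi ih =>
    have hs : ∀ j ∈ s, ∀ d ∈ (f j).support, le d (a j) :=
      fun j hj => hf j (Finset.mem_insert_of_mem hj)
    rw [Finset.prod_insert hi, Finset.sum_insert hi, Finset.prod_insert hi,
      coeff_add_mul_of_rel hadd (hf i (s.mem_insert_self i)) (rel_of_mem_support_prod hadd s hs),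
      ih hs]

theorem rel_of_mem_support_pow (hadd : ∀ a b c, le a b → le (a + c) (b + c))
    {f : MvPolynomial σ R} {a : σ →₀ ℕ} (hf : ∀ d ∈ f.support, le d a) (n : ℕ) :
    ∀ d ∈ (f ^ n).support, le d (n • a) := by
  simpa using rel_of_mem_support_prod hadd (Finset.range n) (fun _ _ => hf)

theorem coeff_nsmul_pow_of_rel (hadd : ∀ a b c, le a b → le (a + c) (b + c))
    {f : MvPolynomial σ R} {a : σ →₀ ℕ} (hf : ∀ d ∈ f.support, le d a) (n : ℕ) :
    coeff (n • a) (f ^ n) = coeff a f ^ n := by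
  simpa using coeff_sum_prod_of_rel hadd (Finset.range n) (fun _ _ => hf)

theorem aeval_monomial_one {ι A : Type*} [CommSemiring A] [Algebra R A] (x : ι → A)
    (α : ι →₀ ℕ) : aeval x (monomial α (1 : R)) = ∏ i ∈ α.support, x i ^ α i := by
  rw [aeval_monomial, map_one, one_mul, Finsupp.prod]

variable {ι : Type*} {P : ι → MvPolynomial σ R} {lm : ι → σ →₀ ℕ}

theorem rel_of_mem_support_aeval_monomial (hadd : ∀ a b c, le a b → le (a + c) (b + c))
    (hP : ∀ i, ∀ d ∈ (P i).support, le d (lm i)) (α : ι →₀ ℕ) :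
    ∀ d ∈ (aeval P (monomial α (1 : R))).support, le d (Finsupp.linearCombination ℕ lm α) := by
  rw [aeval_monomial_one, Finsupp.linearCombination_apply]
  exact rel_of_mem_support_prod hadd _ fun i _ => rel_of_mem_support_pow hadd (hP i) (α i)

theorem coeff_linearCombination_aeval_monomial (hadd : ∀ a b c, le a b → le (a + c) (b + c))
    (hP : ∀ i, ∀ d ∈ (P i).support, le d (lm i)) (α : ι →₀ ℕ) :
    coeff (Finsupp.linearCombination ℕ lm α) (aeval P (monomial α (1 : R))) =
      α.prod fun i n => coeff (lm i) (P i) ^ n := by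
  rw [aeval_monomial_one, Finsupp.linearCombination_apply, Finsupp.sum,
    coeff_sum_prod_of_rel hadd _ fun i _ => rel_of_mem_support_pow hadd (hP i) (α i), Finsupp.prod]
  exact Finset.prod_congr rfl fun i _ => coeff_nsmul_pow_of_rel hadd (hP i) (α i)

theorem coeff_linearCombination_aeval_of_forall_rel_imp_eq
    (hadd : ∀ a b c, le a b → le (a + c) (b + c))
    (hP : ∀ i, ∀ d ∈ (P i).support, le d (lm i)) (Q : MvPolynomial ι R) {α₀ : ι →₀ ℕ}
    (hα₀ : ∀ α ∈ Q.support,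
      le (Finsupp.linearCombination ℕ lm α₀) (Finsupp.linearCombination ℕ lm α) → α = α₀) :
    coeff (Finsupp.linearCombination ℕ lm α₀) (aeval P Q) =
      coeff α₀ Q * α₀.prod fun i n => coeff (lm i) (P i) ^ n := by
  have hterm : ∀ α d, coeff d (aeval P (monomial α (coeff α Q))) =
      coeff α Q * coeff d (aeval P (monomial α (1 : R))) := fun α d => by
    conv_lhs => rw [← mul_one (coeff α Q), ← C_mul_monomial]
    rw [map_mul, aeval_C, algebraMap_eq, coeff_C_mul]
  conv_lhs => rw [Q.as_sum, map_sum, coeff_sum]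
  rw [Finset.sum_eq_single α₀, hterm, coeff_linearCombination_aeval_monomial hadd hP]
  · intro α hα hne
    rw [hterm]
    refine mul_eq_zero_of_right _ (notMem_support_iff.1 fun hmem => hne (hα₀ α hα ?_))
    exact rel_of_mem_support_aeval_monomial hadd hP α _ hmem
  · intro hα₀Q
    rw [hterm, notMem_support_iff.1 hα₀Q, zero_mul]

end MvPolynomial

theorem AlgebraicIndependent.injective_linearCombination {σ ι R : Type*} [CommRing R]
    [Nontrivial R] {lm : ι → σ →₀ ℕ}
    (h : AlgebraicIndependent R fun i => monomial (lm i) (1 : R)) :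
    Function.Injective (Finsupp.linearCombination ℕ lm) := by
  have aeval_eq (α : ι →₀ ℕ) : aeval (fun i => monomial (lm i) (1 : R)) (monomial α (1 : R)) =
      monomial (Finsupp.linearCombination ℕ lm α) 1 := by
    rw [aeval_monomial_one, Finsupp.linearCombination_apply, Finsupp.sum, monomial_sum_one]
    simp only [monomial_pow, one_pow]
  intro α β hαβ
  refine monomial_left_injective (one_ne_zero (α := R)) (h ?_)
  beta_reduce
  rw [aeval_eq, aeval_eq, hαβ]

theorem algebraicIndependent_of_leadingMonomials_general
    {k : Type*} [Field k] {m l : ℕ}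
    (le : (Fin m →₀ ℕ) → (Fin m →₀ ℕ) → Prop) [IsLinearOrder _ le]
    (hadd : ∀ a b c, le a b → le (a + c) (b + c))
    (P : Fin l → MvPolynomial (Fin m) k)
    (lm : Fin l → (Fin m →₀ ℕ))
    (hmem : ∀ i, lm i ∈ (P i).support)
    (hmax : ∀ i, ∀ d ∈ (P i).support, le d (lm i))
    (hind : AlgebraicIndependent k fun i => (MvPolynomial.monomial (lm i) (1 : k))) :
    AlgebraicIndependent k P := by
  rw [algebraicIndependent_iff]
  intro Q hQ
  by_contra hQ0
  obtain ⟨α₀, hα₀, hα₀_max⟩ := Q.support.exists_mem_forall_rel_image (r := le)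
    (Finsupp.linearCombination ℕ lm) (support_nonempty.2 hQ0)
  have hcoeff := coeff_linearCombination_aeval_of_forall_rel_imp_eq hadd hmax Q
    fun α hα h => hind.injective_linearCombination (antisymm (hα₀_max α hα) h)
  rw [hQ, coeff_zero] at hcoeff
  refine mul_ne_zero (mem_support_iff.1 hα₀) ?_ hcoeff.symm
  exact Finsupp.prod_ne_zero_iff.2 fun i _ => pow_ne_zero _ (mem_support_iff.1 (hmem i))

/-- if the leading monomials (with respect to a monomial order,
i.e. a linear order on exponent vectors which is compatible with addition and
has `0` as least element) of polynomials `P_1,…,P_l` are algebraically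
independent over the field `k`, then so are `P_1,…,P_l`. -/
theorem algebraicIndependent_of_leadingMonomials
    {k : Type*} [Field k] {m l : ℕ}
    (le : (Fin m →₀ ℕ) → (Fin m →₀ ℕ) → Prop) [IsLinearOrder _ le]
    (hadd : ∀ a b c, le a b → le (a + c) (b + c))
    (hzero : ∀ a, le 0 a)
    (P : Fin l → MvPolynomial (Fin m) k)
    (lm : Fin l → (Fin m →₀ ℕ))
    (hmem : ∀ i, lm i ∈ (P i).support)
    (hmax : ∀ i, ∀ d ∈ (P i).support, le d (lm i))
    (hind : AlgebraicIndependent k fun i => (MvPolynomial.monomial (lm i) (1 : k))) :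
    AlgebraicIndependent k P :=
  algebraicIndependent_of_leadingMonomials_general le hadd P lm hmem hmax hind
end

section
/- For k ≥ 1, the rectangle Schur polynomials s_{R_1}, …, s_{R_k}, where R_a = ((k−a+1)^a) is the a×(k−a+1) rectangular partition, are algebraically independent over ℝ as elements of the ring of symmetric functions. -/
/-!
Give the variable `X i` of `ℝ[h_1, …, h_k]`, which stands for `h_{i+1}`, the weight `W (i+1)`
where `W n = n (2k+1-n)`. Every `hsym k n` is then weighted homogeneous of weight `W n`, and in
the Jacobi–Trudi expansion of `s_{R_{a+1}}` the term of the permutation `σ` has weight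
`∑ i, W (c - σ i + i)` with `c = k - a`. By strict concavity of `W` this is strictly below
`(a+1) W c` unless `σ = 1`, so `h_{k-a}^{a+1}` is the monic leading monomial of `s_{R_{a+1}}`.
These leading monomials are powers of distinct variables, hence distinct monomials in the
`s_{R_b}` have distinct leading monomials, and in a nonzero polynomial relation the one of
largest weight cannot cancel.
-/

open MvPolynomial

/-- The complete homogeneous symmetric functions `h_n` viewed as generators:
`Λ_(k) = ℝ[h_1,…,h_k]` is modelled as `MvPolynomial (Fin k) ℝ`, where the
variable `X i` stands for `h_{i+1}`.  `hsym k n` is `h_n` for `1 ≤ n ≤ k`,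
`1` for `n = 0` and `0` otherwise. -/
noncomputable def hsym (k : ℕ) (n : ℤ) : MvPolynomial (Fin k) ℝ :=
  if hn : 0 < n ∧ n ≤ (k : ℤ) then X ⟨(n - 1).toNat, by omega⟩
  else if n = 0 then 1 else 0

/-- The Schur function of the rectangular partition `R_{a+1} = ((k-a)^{a+1})`
(i.e. `R_b = ((k-b+1)^b)` for `b = a+1`), defined via the Jacobi-Trudi
determinant `det (h_{λ_i - i + j})`. -/
noncomputable def sR (k : ℕ) (a : Fin k) : MvPolynomial (Fin k) ℝ :=
  (Matrix.of fun i j : Fin (a.val + 1) =>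
    hsym k ((((k : ℤ) - a.val) - i.val) + j.val)).det

open Finsupp (weight single linearCombination)

theorem Finsupp.linearCombination_single_injective {ι σ : Type*} {j : ι → σ}
    (hj : Function.Injective j) {n : ι → ℕ} (hn : ∀ i, n i ≠ 0) :
    Function.Injective (linearCombination ℕ fun i => single (j i) (n i)) := by
  classical
  have eval : ∀ d i, linearCombination ℕ (fun i => single (j i) (n i)) d (j i) = d i * n i := by
    intro d i
    rw [linearCombination_apply, Finsupp.sum_apply, Finsupp.sum, Finset.sum_eq_single i]
    · simp
    · intro l _ hl
      simp [hj.ne hl]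
    · simp +contextual
  intro d d' h
  ext i
  exact Nat.eq_of_mul_eq_mul_right (Nat.pos_of_ne_zero (hn i)) (by rw [← eval, ← eval, h])

namespace MvPolynomial

variable {σ R M : Type*} [CommRing R] [AddCommMonoid M] [LinearOrder M] {w : σ → M}

def IsWeightedLeadingMonomial (w : σ → M) (f : MvPolynomial σ R) (m : σ →₀ ℕ) : Prop :=
  ∀ e ∈ (f - monomial m 1).support, weight w e < weight w m

namespace IsWeightedLeadingMonomial

variable {f g : MvPolynomial σ R} {m n : σ →₀ ℕ}

theorem weight_le (hf : IsWeightedLeadingMonomial w f m) {e : σ →₀ ℕ} (he : e ∈ f.support) :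
    weight w e ≤ weight w m := by
  classical
  rw [← sub_add_cancel f (monomial m 1)] at he
  rcases Finset.mem_union.mp (support_add he) with h | h
  · exact (hf e h).le
  · rw [Finset.mem_singleton.mp (support_monomial_subset h)]

theorem coeff_self (hf : IsWeightedLeadingMonomial w f m) : coeff m f = 1 := by
  classical
  by_contra h
  have hm : m ∈ (f - monomial m 1).support := by
    rwa [mem_support_iff, coeff_sub, coeff_monomial, if_pos rfl, sub_ne_zero]
  exact (hf m hm).false

theorem coeff_eq_zero (hf : IsWeightedLeadingMonomial w f m) {e : σ →₀ ℕ}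
    (he : weight w m ≤ weight w e) (hne : e ≠ m) : coeff e f = 0 := by
  classical
  have : coeff e (f - monomial m 1) = 0 :=
    notMem_support_iff.mp fun h => (hf e h).not_ge he
  rwa [coeff_sub, coeff_monomial, if_neg hne.symm, sub_zero] at this

theorem one : IsWeightedLeadingMonomial w (1 : MvPolynomial σ R) 0 := by
  simp [IsWeightedLeadingMonomial]

variable [IsOrderedCancelAddMonoid M]

theorem mul (hf : IsWeightedLeadingMonomial w f m) (hg : IsWeightedLeadingMonomial w g n) :
    IsWeightedLeadingMonomial w (f * g) (m + n) := by
  classical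
  intro e he
  have split : f * g - monomial (m + n) 1 =
      (f - monomial m 1) * g + monomial m 1 * (g - monomial n 1) := by
    have : monomial m (1 : R) * monomial n 1 = monomial (m + n) 1 := by
      rw [monomial_mul, one_mul]
    rw [← this]; ring
  rw [split] at he
  rcases Finset.mem_union.mp (support_add he) with h | h
  · obtain ⟨e₁, h₁, e₂, h₂, rfl⟩ := Finset.mem_add.mp (support_mul _ _ h)
    rw [map_add, map_add]
    exact add_lt_add_of_lt_of_le (hf e₁ h₁) (hg.weight_le h₂)
  · obtain ⟨e₁, h₁, e₂, h₂, rfl⟩ := Finset.mem_add.mp (support_mul _ _ h)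
    rw [Finset.mem_singleton.mp (support_monomial_subset h₁), map_add, map_add]
    exact add_lt_add_right (hg e₂ h₂) _

theorem pow (hf : IsWeightedLeadingMonomial w f m) (k : ℕ) :
    IsWeightedLeadingMonomial w (f ^ k) (k • m) := by
  induction k with
  | zero => simpa using one
  | succ k ih => simpa [pow_succ, succ_nsmul] using ih.mul hf

theorem prod {ι : Type*} (s : Finset ι) {f : ι → MvPolynomial σ R} {m : ι → σ →₀ ℕ}
    (h : ∀ i ∈ s, IsWeightedLeadingMonomial w (f i) (m i)) :
    IsWeightedLeadingMonomial w (∏ i ∈ s, f i) (∑ i ∈ s, m i) := by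
  classical
  induction s using Finset.cons_induction with
  | empty => simpa using one
  | cons a s ha ih =>
    rw [Finset.prod_cons, Finset.sum_cons]
    exact (h a (Finset.mem_cons_self a s)).mul (ih fun i hi => h i (Finset.mem_cons_of_mem hi))

theorem finsuppProd_pow {ι : Type*} {f : ι → MvPolynomial σ R} {m : ι → σ →₀ ℕ}
    (h : ∀ i, IsWeightedLeadingMonomial w (f i) (m i)) (d : ι →₀ ℕ) :
    IsWeightedLeadingMonomial w (d.prod fun i k => f i ^ k) (linearCombination ℕ m d) :=
  prod d.support fun i _ => (h i).pow (d i)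

end IsWeightedLeadingMonomial

theorem algebraicIndependent_of_isWeightedLeadingMonomial [IsOrderedCancelAddMonoid M]
    {ι : Type*} {f : ι → MvPolynomial σ R} {m : ι → σ →₀ ℕ}
    (hf : ∀ i, IsWeightedLeadingMonomial w (f i) (m i))
    (hm : Function.Injective (linearCombination ℕ m)) :
    AlgebraicIndependent R f := by
  rw [algebraicIndependent_iff]
  intro p hp
  by_contra hp₀
  obtain ⟨d₀, hd₀, hmax⟩ := p.support.exists_max_image
    (fun d => weight w (linearCombination ℕ m d)) (support_nonempty.mpr hp₀)
  have lead := IsWeightedLeadingMonomial.finsuppProd_pow hf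
  have top_coeff : coeff (linearCombination ℕ m d₀) (aeval f p) = coeff d₀ p := by
    conv_lhs => rw [p.as_sum]
    simp only [map_sum, aeval_monomial, coeff_sum, algebraMap_eq, coeff_C_mul]
    rw [Finset.sum_eq_single d₀ (fun d hd hne => by
      rw [(lead d).coeff_eq_zero (hmax d hd) (hm.ne hne.symm), mul_zero])
      (fun h => absurd hd₀ h), (lead d₀).coeff_self, mul_one]
  rw [hp, coeff_zero] at top_coeff
  exact mem_support_iff.mp hd₀ top_coeff.symm

end MvPolynomial

def concaveWeight (k : ℕ) (n : ℤ) : ℤ := n * (2 * k + 1 - n)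

def hWeight (k : ℕ) (i : Fin k) : ℤ := concaveWeight k (i + 1)

theorem sum_concaveWeight_lt {k m : ℕ} (c : ℤ) {σ : Equiv.Perm (Fin m)} (hσ : σ ≠ 1) :
    ∑ i, concaveWeight k (c - σ i + i) < m * concaveWeight k c := by
  have expand : ∀ i : Fin m, concaveWeight k (c - σ i + i) =
      concaveWeight k c + ((i : ℤ) - σ i) * (2 * k + 1 - 2 * c) - ((i : ℤ) - σ i) ^ 2 := by
    intro i; unfold concaveWeight; ring
  have displacement_sum : ∑ i : Fin m, ((i : ℤ) - σ i) = 0 := by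
    rw [Finset.sum_sub_distrib, Equiv.sum_comp σ (fun i : Fin m => (i : ℤ)), sub_self]
  have square_sum_pos : 0 < ∑ i : Fin m, ((i : ℤ) - σ i) ^ 2 := by
    obtain ⟨i, hi⟩ : ∃ i, σ i ≠ i := not_forall.mp fun h => hσ (Equiv.ext h)
    refine Finset.sum_pos' (fun j _ => sq_nonneg _) ⟨i, Finset.mem_univ i, ?_⟩
    have : (i : ℤ) ≠ σ i := by exact_mod_cast Fin.val_injective.ne hi.symm
    positivity
  simp only [expand, Finset.sum_sub_distrib, Finset.sum_add_distrib, ← Finset.sum_mul,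
    displacement_sum, Finset.sum_const, Finset.card_univ, Fintype.card_fin, nsmul_eq_mul]
  linarith

section RectangleSchur

variable {k : ℕ}

theorem isWeightedHomogeneous_hsym (n : ℤ) :
    IsWeightedHomogeneous (hWeight k) (hsym k n) (concaveWeight k n) := by
  unfold hsym
  split_ifs with h₁ h₂
  · convert isWeightedHomogeneous_X ℝ (hWeight k) _ using 2
    simp only [hWeight]
    congr 1
    omega
  · simpa [h₂, concaveWeight] using isWeightedHomogeneous_one ℝ _
  · exact isWeightedHomogeneous_zero ℝ _ _

theorem isWeightedLeadingMonomial_sR (a : Fin k) :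
    IsWeightedLeadingMonomial (hWeight k) (sR k a) (single a.rev (a.val + 1)) := by
  classical
  set c : ℤ := k - a
  have diagonal : ∀ i : Fin (a + 1), hsym k (c - i + i) = X a.rev := by
    intro i
    rw [hsym, dif_pos (by omega)]
    congr 1
    ext
    simp only [Fin.val_rev]
    omega
  have lead_weight : weight (hWeight k) (single a.rev (a.val + 1)) =
      ((a.val + 1 : ℕ) : ℤ) * concaveWeight k c := by
    rw [Finsupp.weight_single, nsmul_eq_mul]
    simp only [hWeight, Fin.val_rev]
    congr 2
    omega
  intro e he
  rw [sR, Matrix.det_apply, ← Finset.sum_erase_add _ _ (Finset.mem_univ 1),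
    Equiv.Perm.sign_one, one_smul] at he
  simp only [Equiv.Perm.one_apply, Matrix.of_apply] at he
  rw [Finset.prod_congr rfl fun i _ => diagonal i, Finset.prod_const, Finset.card_univ,
    Fintype.card_fin, X_pow_eq_monomial, add_sub_cancel_right] at he
  obtain ⟨σ, hσ, he⟩ := Finset.mem_biUnion.mp (support_sum he)
  have homogeneous := IsWeightedHomogeneous.prod Finset.univ _ _
    fun i _ => isWeightedHomogeneous_hsym (k := k) (c - σ i + i)
  rw [homogeneous (mem_support_iff.mp (support_smul he)), lead_weight]
  exact sum_concaveWeight_lt c (Finset.ne_of_mem_erase hσ)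
end RectangleSchur

theorem rectangle_schur_algebraically_independent_general (k : ℕ) :
    AlgebraicIndependent ℝ (sR k) :=
  algebraicIndependent_of_isWeightedLeadingMonomial isWeightedLeadingMonomial_sR
    (Finsupp.linearCombination_single_injective Fin.rev_injective fun a => a.val.succ_ne_zero)

/-- for `k ≥ 1` the rectangle Schur functions `s_{R_1},…,s_{R_k}`
are algebraically independent over `ℝ`. -/
theorem rectangle_schur_algebraically_independent (k : ℕ) (hk : 1 ≤ k) :
    AlgebraicIndependent ℝ (sR k) :=
  rectangle_schur_algebraically_independent_general k
end

section
/- Let A, A′ be alcoves with centers v, v′ in the region B (all simple-root coordinates in (0,1)) such that A′ = s_{α,r}(A) with r < ⟨α, v′⟩ < r+1 (a covering in the weak order). Then I(A) = s_{α*, ⟨α,ρ⟩ − r}(I(A′)) and ⟨α,ρ⟩ − r < ⟨α*, I(v)⟩ < ⟨α,ρ⟩ − r + 1, where α* = −w_0(α) and I = t_ρ∘w_0. -/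
/- Type `A_k` is modelled in the ambient space `ℝ^{k+1}`: the roots are
`e_i - e_j` (`i ≠ j`), the simple roots are `α_i = e_{i-1} - e_i`, the pairing
is the standard inner product, `w₀` reverses the coordinates, and
`ρ = (k, k-1, …, 0)` satisfies `⟨ρ, e_i - e_j⟩ = j - i`. -/

/-- The standard pairing on `ℝ^n`. -/
def inn {n : ℕ} (v w : Fin n → ℝ) : ℝ := ∑ l, v l * w l

/-- The root `e_i - e_j` of type `A_k` (for `i ≠ j`). -/
def aroot {n : ℕ} (i j : Fin n) : Fin n → ℝ :=
  fun l => (if l = i then 1 else 0) - (if l = j then 1 else 0)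

/-- The affine reflection `s_{α,r}` in the hyperplane `H_{α,r} = {v : ⟨v,α⟩ = r}`
(for a root `α` of type `A`, so `⟨α,α⟩ = 2`). -/
def arefl {n : ℕ} (α : Fin n → ℝ) (r : ℝ) (v : Fin n → ℝ) : Fin n → ℝ :=
  v - (inn v α - r) • α

/-- The longest element `w₀` of `S_{k+1}` acting on `ℝ^{k+1}`: coordinate reversal. -/
def w0amb {n : ℕ} (v : Fin n → ℝ) : Fin n → ℝ := fun l => v (Fin.rev l)

/-- A representative of `ρ = Λ_1 + ⋯ + Λ_k`: `ρ = (k, k-1, …, 0)`. -/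
def rhoamb (k : ℕ) : Fin (k + 1) → ℝ := fun l => (k : ℝ) - l.val

/-- The involution `I = t_ρ ∘ w₀`. -/
def Iamb (k : ℕ) (v : Fin (k + 1) → ℝ) : Fin (k + 1) → ℝ := w0amb v + rhoamb k

/-- The simple-root coordinates `⟨v, α_l⟩`, `α_l = e_{l-1} - e_l`. -/
def simpleCoord (k : ℕ) (v : Fin (k + 1) → ℝ) (l : Fin k) : ℝ :=
  inn v (aroot l.castSucc l.succ)

/-! Conjugating by `I = t_ρ ∘ w₀` turns `s_{α,r}` into `s_{w₀α, r + ⟨ρ,w₀α⟩} = s_{α*, ⟨ρ,α*⟩ - r}`,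
and `⟨ρ,α*⟩ = ⟨ρ,α⟩`; since `s_{α,r}` is an involution, `v = s_{α,r}(v')`, which gives the
identity. For the inequalities, `⟨α*, I(v)⟩ = ⟨ρ,α⟩ - ⟨α,v⟩` and `⟨α,v'⟩ = 2r - ⟨α,v⟩`, so
`⟨α*, I(v)⟩ - (⟨α,ρ⟩ - r) = ⟨α,v'⟩ - r ∈ (0,1)`. -/

section Reflection

variable {n : ℕ}

lemma inn_eq_dotProduct (v w : Fin n → ℝ) : inn v w = v ⬝ᵥ w := rfl

lemma inn_aroot (v : Fin n → ℝ) (i j : Fin n) : inn v (aroot i j) = v i - v j := by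
  simp [inn, aroot, mul_sub, Finset.sum_sub_distrib]

lemma inn_aroot_self {i j : Fin n} (hij : i ≠ j) : inn (aroot i j) (aroot i j) = 2 := by
  rw [inn_aroot]
  simp [aroot, hij, hij.symm]
  norm_num

lemma aroot_swap (i j : Fin n) : aroot j i = -aroot i j := by
  funext l
  simp only [aroot, Pi.neg_apply]
  ring

lemma inn_arefl_self {α : Fin n → ℝ} (hα : inn α α = 2) (r : ℝ) (v : Fin n → ℝ) :
    inn (arefl α r v) α = 2 * r - inn v α := by
  simp only [arefl, inn_eq_dotProduct, sub_dotProduct, smul_dotProduct, smul_eq_mul] at hα ⊢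
  rw [hα]
  ring

lemma arefl_arefl {α : Fin n → ℝ} (hα : inn α α = 2) (r : ℝ) (v : Fin n → ℝ) :
    arefl α r (arefl α r v) = v := by
  rw [arefl, inn_arefl_self hα, arefl, sub_sub, ← add_smul]
  ring_nf
  simp

lemma arefl_neg (α : Fin n → ℝ) (r : ℝ) : arefl (-α) (-r) = arefl α r := by
  funext v
  simp only [arefl, inn_eq_dotProduct, dotProduct_neg, smul_neg]
  rw [← neg_smul]
  congr 2
  ring

lemma arefl_add (α β : Fin n → ℝ) (r : ℝ) (v : Fin n → ℝ) :
    arefl α r v + β = arefl α (r + inn β α) (v + β) := by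
  simp only [arefl, inn_eq_dotProduct, add_dotProduct]
  rw [show v ⬝ᵥ α + β ⬝ᵥ α - (r + β ⬝ᵥ α) = v ⬝ᵥ α - r by ring]
  abel

lemma inn_w0amb_w0amb (v w : Fin n → ℝ) : inn (w0amb v) (w0amb w) = inn v w :=
  Fintype.sum_equiv Fin.revPerm _ _ fun _ => rfl

lemma w0amb_arefl (α : Fin n → ℝ) (r : ℝ) (v : Fin n → ℝ) :
    w0amb (arefl α r v) = arefl (w0amb α) r (w0amb v) := by
  funext l
  simp [w0amb, arefl, inn_w0amb_w0amb]

lemma w0amb_aroot (i j : Fin n) : w0amb (aroot i j) = -aroot (Fin.rev j) (Fin.rev i) := by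
  rw [← aroot_swap]
  funext l
  simp only [w0amb, aroot, Fin.rev_eq_iff]

end Reflection

lemma rhoamb_rev (k : ℕ) (j : Fin (k + 1)) : rhoamb k (Fin.rev j) = j.val := by
  have hj : j.val ≤ k := Nat.lt_succ_iff.mp j.isLt
  rw [rhoamb, Fin.val_rev, show k + 1 - (j.val + 1) = k - j.val by omega, Nat.cast_sub hj]
  ring

lemma inn_rhoamb_aroot_rev (k : ℕ) (i j : Fin (k + 1)) :
    inn (rhoamb k) (aroot (Fin.rev j) (Fin.rev i)) = inn (rhoamb k) (aroot i j) := by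
  rw [inn_aroot, inn_aroot, rhoamb_rev, rhoamb_rev]
  simp only [rhoamb]
  ring

lemma Iamb_arefl (k : ℕ) (α : Fin (k + 1) → ℝ) (r : ℝ) (v : Fin (k + 1) → ℝ) :
    Iamb k (arefl α r v) = arefl (w0amb α) (r + inn (rhoamb k) (w0amb α)) (Iamb k v) := by
  rw [Iamb, w0amb_arefl, arefl_add, Iamb]

lemma Iamb_arefl_aroot (k : ℕ) (i j : Fin (k + 1)) (r : ℝ) (v : Fin (k + 1) → ℝ) :
    Iamb k (arefl (aroot i j) r v) =
      arefl (aroot (Fin.rev j) (Fin.rev i)) (inn (rhoamb k) (aroot i j) - r) (Iamb k v) := by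
  rw [Iamb_arefl, w0amb_aroot, ← arefl_neg (aroot _ _), inn_eq_dotProduct, dotProduct_neg,
    ← inn_eq_dotProduct, inn_rhoamb_aroot_rev]
  congr 2
  ring

lemma inn_Iamb_aroot_rev (k : ℕ) (i j : Fin (k + 1)) (v : Fin (k + 1) → ℝ) :
    inn (Iamb k v) (aroot (Fin.rev j) (Fin.rev i)) =
      inn (rhoamb k) (aroot i j) - inn v (aroot i j) := by
  rw [← inn_rhoamb_aroot_rev, inn_aroot, inn_aroot, inn_aroot]
  simp only [Iamb, Pi.add_apply, w0amb, Fin.rev_rev]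
  ring

theorem involution_reverses_covering_general (k : ℕ) (i j : Fin (k + 1)) (hij : i ≠ j)
    (r : ℝ) (v v' : Fin (k + 1) → ℝ)
    (hrefl : v' = arefl (aroot i j) r v)
    (h₁ : r < inn v' (aroot i j)) (h₂ : inn v' (aroot i j) < r + 1) :
    Iamb k v =
      arefl (aroot (Fin.rev j) (Fin.rev i)) (inn (rhoamb k) (aroot i j) - r)
        (Iamb k v')
    ∧ inn (rhoamb k) (aroot i j) - r < inn (Iamb k v) (aroot (Fin.rev j) (Fin.rev i))
    ∧ inn (Iamb k v) (aroot (Fin.rev j) (Fin.rev i)) < inn (rhoamb k) (aroot i j) - r + 1 := by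
  have hα := inn_aroot_self hij
  have hv : v = arefl (aroot i j) r v' := by rw [hrefl, arefl_arefl hα]
  have hv'α : inn v' (aroot i j) = 2 * r - inn v (aroot i j) := by
    rw [hrefl, inn_arefl_self hα]
  refine ⟨by rw [hv, Iamb_arefl_aroot], ?_, ?_⟩ <;>
    · rw [inn_Iamb_aroot_rev]
      linarith

/-- let `A, A'` be alcoves with centers `v, v'` in the region `B`
(all simple-root coordinates in `(0,1)`) such that `A' = s_{α,r}(A)` with
`r < ⟨α, v'⟩ < r+1`, for a root `α = e_i - e_j`.  Then
`I(A) = s_{α*, ⟨α,ρ⟩-r}(I(A'))` and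
`⟨α,ρ⟩ - r < ⟨α*, I(v)⟩ < ⟨α,ρ⟩ - r + 1`, where `α* = -w₀(α) = e_{rev j} - e_{rev i}`. -/
theorem involution_reverses_covering (k : ℕ) (i j : Fin (k + 1)) (hij : i ≠ j)
    (r : ℝ) (v v' : Fin (k + 1) → ℝ)
    (hv : ∀ l : Fin k, 0 < simpleCoord k v l ∧ simpleCoord k v l < 1)
    (hv' : ∀ l : Fin k, 0 < simpleCoord k v' l ∧ simpleCoord k v' l < 1)
    (hrefl : v' = arefl (aroot i j) r v)
    (h₁ : r < inn v' (aroot i j)) (h₂ : inn v' (aroot i j) < r + 1) :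
    Iamb k v =
      arefl (aroot (Fin.rev j) (Fin.rev i)) (inn (rhoamb k) (aroot i j) - r)
        (Iamb k v')
    ∧ inn (rhoamb k) (aroot i j) - r < inn (Iamb k v) (aroot (Fin.rev j) (Fin.rev i))
    ∧ inn (Iamb k v) (aroot (Fin.rev j) (Fin.rev i)) < inn (rhoamb k) (aroot i j) - r + 1 :=
  involution_reverses_covering_general k i j hij r v v' hrefl h₁ h₂
end
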